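/- Let Q, R ⊆ 𝔽₂ⁿ. The set Q•R ⊆ 𝔽₂^{n+2} is powerful if and only if Q, R, and Q ∩ R are all powerful. -/

import Mathlib

/-- A finite set `S` of vectors in `𝔽₂ⁿ` is *powerful* if for every subset `X` of the
coordinate positions, the number of vectors in `S` that are zero at every position in `X`
is a power of 2. -/
def IsPowerful {n : ℕ} (S : Finset (Fin n → ZMod 2)) : Prop :=
  ∀ X : Finset (Fin n), ∃ d : ℕ, (S.filter (fun v => ∀ i ∈ X, v i = 0)).card = 2 ^ d

/-- The combination `Q•R ⊆ 𝔽₂^{n+2}`: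
`{v00 : v ∈ Q ∩ R} ∪ {v01 : v ∈ Q ∖ R} ∪ {v10 : v ∈ R ∖ Q} ∪ {v11 : v ∉ Q ∪ R}`. -/
def bulletComb {n : ℕ} (Q R : Finset (Fin n → ZMod 2)) : Finset (Fin (n + 2) → ZMod 2) :=
  ((Q ∩ R).image (fun v => Fin.append v ![0, 0])) ∪
  ((Q \ R).image (fun v => Fin.append v ![0, 1])) ∪
  ((R \ Q).image (fun v => Fin.append v ![1, 0])) ∪
  (((Q ∪ R)ᶜ).image (fun v => Fin.append v ![1, 1]))

/-!
`Q•R` is the graph, over all of `𝔽₂ⁿ`, of `v ↦ (𝟙[v ∉ Q], 𝟙[v ∉ R])`. Hence the vectors of `Q•R`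
vanishing on `X ⊆ [n+2]` correspond to the vectors of `𝔽₂ⁿ` that vanish on `X ∩ [n]` and lie in `Q`
if `n+1 ∈ X` and in `R` if `n+2 ∈ X`. The counts defining powerfulness of `Q•R` are therefore
exactly those of `Q ∩ R`, `Q`, `R` and `𝔽₂ⁿ`, and the last are always powers of 2.
-/

open Finset

theorem card_filter_forall_mem_eq {ι α : Type*} [Fintype ι] [DecidableEq ι] [Fintype α]
    [DecidableEq α] (X : Finset ι) (a : α) :
    #(univ.filter fun v : ι → α => ∀ i ∈ X, v i = a) = Fintype.card α ^ #Xᶜ := by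
  have : univ.filter (fun v : ι → α => ∀ i ∈ X, v i = a) =
      Fintype.piFinset fun i => if i ∈ X then {a} else univ := by
    ext v
    simp only [mem_filter, mem_univ, true_and, Fintype.mem_piFinset]
    refine forall_congr' fun i => ?_
    split_ifs <;> simp_all
  rw [this, Fintype.card_piFinset]
  simp [apply_ite, prod_ite, compl_eq_univ_sdiff, filter_not]

theorem isPowerful_univ (n : ℕ) : IsPowerful (univ : Finset (Fin n → ZMod 2)) :=
  fun X => ⟨#Xᶜ, by convert card_filter_forall_mem_eq X (0 : ZMod 2); exact (ZMod.card 2).symm⟩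

theorem Fin.append_eq_zero_on_iff {m k : ℕ} {α : Type*} [Zero α] (u : Fin m → α)
    (t : Fin k → α) (X : Finset (Fin (m + k))) :
    (∀ i ∈ X, Fin.append u t i = 0) ↔
      (∀ i, Fin.castAdd k i ∈ X → u i = 0) ∧ ∀ j, Fin.natAdd m j ∈ X → t j = 0 := by
  refine (Fin.forall_fin_add fun i => i ∈ X → Fin.append u t i = 0).trans ?_
  simp only [Fin.append_left, Fin.append_right]

section

variable {n : ℕ}

theorem bulletComb_eq_image (Q R : Finset (Fin n → ZMod 2)) :
    bulletComb Q R =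
      univ.image fun v => Fin.append v ![if v ∈ Q then 0 else 1, if v ∈ R then 0 else 1] := by
  set f := fun v => Fin.append v ![if v ∈ Q then 0 else 1, if v ∈ R then 0 else 1]
  have h₁ : (Q ∩ R).image (Fin.append · ![0, 0]) = (Q ∩ R).image f :=
    image_congr fun v hv => by simp_all [f]
  have h₂ : (Q \ R).image (Fin.append · ![0, 1]) = (Q \ R).image f :=
    image_congr fun v hv => by simp_all [f]
  have h₃ : (R \ Q).image (Fin.append · ![1, 0]) = (R \ Q).image f :=
    image_congr fun v hv => by simp_all [f]
  have h₄ : (Q ∪ R)ᶜ.image (Fin.append · ![1, 1]) = (Q ∪ R)ᶜ.image f :=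
    image_congr fun v hv => by simp_all [f]
  rw [bulletComb, h₁, h₂, h₃, h₄, ← image_union, ← image_union, ← image_union]
  congr
  ext v
  by_cases v ∈ Q <;> by_cases v ∈ R <;> simp_all

def bulletProj (Q R : Finset (Fin n → ZMod 2)) (p q : Bool) : Finset (Fin n → ZMod 2) :=
  univ.filter fun v => (p → v ∈ Q) ∧ (q → v ∈ R)

theorem card_filter_bulletComb (Q R : Finset (Fin n → ZMod 2)) (X : Finset (Fin (n + 2))) :
    #((bulletComb Q R).filter fun w => ∀ i ∈ X, w i = 0) =
      #((bulletProj Q R (Fin.natAdd n 0 ∈ X) (Fin.natAdd n 1 ∈ X)).filter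
        fun v => ∀ i ∈ univ.filter (Fin.castAdd 2 · ∈ X), v i = 0) := by
  have hinj : Function.Injective fun v : Fin n → ZMod 2 =>
      Fin.append v ![if v ∈ Q then 0 else 1, if v ∈ R then 0 else 1] :=
    fun v w h => funext fun i => by simpa using congrFun h (Fin.castAdd 2 i)
  rw [bulletComb_eq_image, filter_image, card_image_of_injective _ hinj, bulletProj, filter_filter]
  congr 1
  ext v
  simp [Fin.append_eq_zero_on_iff, Fin.forall_fin_two, and_comm]

theorem isPowerful_bulletComb_iff (Q R : Finset (Fin n → ZMod 2)) :
    IsPowerful (bulletComb Q R) ↔ ∀ p q, IsPowerful (bulletProj Q R p q) := by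
  refine ⟨fun h p q X₀ => ?_, fun h X => by rw [card_filter_bulletComb]; exact h _ _ _⟩
  let X := univ.filter fun i => Fin.append (fun i => decide (i ∈ X₀)) ![p, q] i
  have hX₀ : univ.filter (Fin.castAdd 2 · ∈ X) = X₀ := by ext; simp [X]
  have hp : decide (Fin.natAdd n 0 ∈ X) = p := by simp [X]
  have hq : decide (Fin.natAdd n 1 ∈ X) = q := by simp [X]
  have := h X
  rwa [card_filter_bulletComb, hX₀, hp, hq] at this

end

/-- `Q•R` is powerful if and only if `Q`, `R`, and `Q ∩ R` are all powerful. -/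
theorem bulletComb_powerful_iff {n : ℕ} (Q R : Finset (Fin n → ZMod 2)) :
    IsPowerful (bulletComb Q R) ↔ IsPowerful Q ∧ IsPowerful R ∧ IsPowerful (Q ∩ R) := by
  have h₀₀ : bulletProj Q R false false = univ := by simp [bulletProj]
  have h₁₀ : bulletProj Q R true false = Q := by simp [bulletProj]
  have h₀₁ : bulletProj Q R false true = R := by simp [bulletProj]
  have h₁₁ : bulletProj Q R true true = Q ∩ R := by simp [bulletProj, filter_and]
  simp only [isPowerful_bulletComb_iff, Bool.forall_bool, h₀₀, h₁₀, h₀₁, h₁₁]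
  have := isPowerful_univ n
  tauto
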